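/- arXiv:2105.10388 — 2 statements merged into one kernel-verified Lean document; each statement's English description precedes it below -/
import Mathlib

section
/- The number of distinct pinnacle sets of permutations of [n] equals the binomial coefficient C(n-1, ⌊(n-1)/2⌋). -/
/-!
Call `S ⊆ [n]` admissible if every `s ∈ S` exceeds twice the number of elements of `S` that
are `≤ s`. Pinnacle sets are admissible: the `q` pinnacles of value `≤ s` are pairwise
non-adjacent, and their neighbours are non-pinnacles of smaller value, at least `q + 1` of them.
Conversely, listing `S` as `s₀ < s₁ < ⋯` and `[n] \ S` as `c₀ < c₁ < ⋯`, the word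
`c₀ s₀ c₁ s₁ ⋯ c_{k-1} s_{k-1} c_k c_{k+1} ⋯` has pinnacle set `S`, because admissibility gives
`c_{j+1} < s_j`. Splitting by whether `n ∈ S`, the admissible sets of size `≤ K` satisfy Pascal's
recurrence, so there are `C(n-1, K)` of them when `2K ≤ n - 1`; and no admissible set is larger
than `⌊(n-1)/2⌋`.
-/

def pinSet (n : ℕ) (π : Equiv.Perm (Fin n)) : Finset ℕ :=
  Finset.image (fun i => (π i).val + 1) <| Finset.univ.filter fun i : Fin n =>
    0 < i.val ∧ i.val + 1 < n ∧
    (∀ j : Fin n, j.val + 1 = i.val → π j < π i) ∧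
    (∀ j : Fin n, j.val = i.val + 1 → π j < π i)

open Finset

theorem two_mul_card_lt_card_of_neighbors {P Q : Finset ℕ} (hQ : Q.Nonempty) (hQP : Q ⊆ P)
    (hpred : ∀ i ∈ Q, ∃ j ∈ P \ Q, j + 1 = i) (hsucc : ∀ i ∈ Q, i + 1 ∈ P \ Q) :
    2 * #Q < #P := by
  obtain ⟨e, he, hemin⟩ := hpred _ (Q.min'_mem hQ)
  have hsub : insert e (Q.image (· + 1)) ⊆ P \ Q := by
    simpa [insert_subset_iff, he, image_subset_iff] using hsucc
  have hfresh : e ∉ Q.image (· + 1) := by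
    simp only [mem_image, not_exists, not_and]
    intro j hj hje
    have := Q.min'_le j hj
    omega
  have := card_le_card hsub
  rw [card_insert_of_notMem hfresh, card_image_of_injective _ (add_left_injective 1),
    card_sdiff_of_subset hQP] at this
  have := card_le_card hQP
  omega

section Pinnacle

variable {α : Type*} [LinearOrder α] {n : ℕ}

def IsPinnacle (f : Fin n → α) (i : Fin n) : Prop :=
  0 < i.val ∧ i.val + 1 < n ∧
    (∀ j : Fin n, j.val + 1 = i.val → f j < f i) ∧ (∀ j : Fin n, j.val = i.val + 1 → f j < f i)

instance (f : Fin n → α) : DecidablePred (IsPinnacle f) :=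
  fun _ => by unfold IsPinnacle; infer_instance

lemma pinSet_eq_image (π : Equiv.Perm (Fin n)) :
    pinSet n π = (univ.filter (IsPinnacle π)).image fun i => (π i).val + 1 := rfl

lemma isPinnacle_comp_iff {β : Type*} [LinearOrder β] {g : α → β} (hg : StrictMono g)
    (f : Fin n → α) (i : Fin n) : IsPinnacle (g ∘ f) i ↔ IsPinnacle f i := by
  simp only [IsPinnacle, Function.comp_apply, hg.lt_iff_lt]

lemma isPinnacle_comp_val_iff (w : ℕ → α) (i : Fin n) :
    IsPinnacle (fun j : Fin n => w j) i ↔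
      0 < i.val ∧ i.val + 1 < n ∧ w (i - 1) < w i ∧ w (i + 1) < w i := by
  constructor
  · rintro ⟨h0, hn, hl, hr⟩
    exact ⟨h0, hn, hl ⟨i - 1, by omega⟩ (by simp; omega), hr ⟨i + 1, hn⟩ rfl⟩
  · rintro ⟨h0, hn, hl, hr⟩
    refine ⟨h0, hn, fun j hj => ?_, fun j hj => ?_⟩
    · simpa only [show j.val = i - 1 by omega]
    · simpa only [hj]

lemma IsPinnacle.exists_pred {f : Fin n → α} {i : Fin n} (hi : IsPinnacle f i) :
    ∃ j, j.val + 1 = i.val ∧ f j < f i ∧ ¬IsPinnacle f j := by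
  obtain ⟨h0, hn, hl, -⟩ := hi
  refine ⟨⟨i - 1, by omega⟩, by simp; omega, hl _ (by simp; omega), fun hj => ?_⟩
  exact (hl _ (by simp; omega)).not_gt (hj.2.2.2 i (by simp; omega))

lemma IsPinnacle.exists_succ {f : Fin n → α} {i : Fin n} (hi : IsPinnacle f i) :
    ∃ j, j.val = i.val + 1 ∧ f j < f i ∧ ¬IsPinnacle f j := by
  obtain ⟨-, hn, -, hr⟩ := hi
  refine ⟨⟨i + 1, hn⟩, rfl, hr _ rfl, fun hj => ?_⟩
  exact (hr _ rfl).not_gt (hj.2.2.1 i rfl)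

theorem IsPinnacle.two_mul_card_lt {f : Fin n → α} {i : Fin n} (hi : IsPinnacle f i) :
    2 * #{j | IsPinnacle f j ∧ f j ≤ f i} < #{j | f j ≤ f i} := by
  have key := two_mul_card_lt_card_of_neighbors
    (P := (univ.filter fun j => f j ≤ f i).map Fin.valEmbedding)
    (Q := (univ.filter fun j => IsPinnacle f j ∧ f j ≤ f i).map Fin.valEmbedding)
    ⟨i, mem_map_of_mem _ (by simp [hi])⟩ (map_subset_map.mpr fun j => by simp +contextual)
  rw [card_map, card_map] at key
  refine key ?_ ?_
  · simp only [mem_map, mem_filter, mem_univ, true_and, Fin.valEmbedding_apply, mem_sdiff]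
    rintro _ ⟨j, ⟨hj, hji⟩, rfl⟩
    obtain ⟨k, hk, hkj, hnk⟩ := hj.exists_pred
    refine ⟨k, ⟨⟨k, (hkj.trans_le hji).le, rfl⟩, ?_⟩, hk⟩
    rintro ⟨k', ⟨hk', -⟩, hkk'⟩
    exact hnk (Fin.ext hkk' ▸ hk')
  · simp only [mem_map, mem_filter, mem_univ, true_and, Fin.valEmbedding_apply, mem_sdiff]
    rintro _ ⟨j, ⟨hj, hji⟩, rfl⟩
    obtain ⟨k, hk, hkj, hnk⟩ := hj.exists_succ
    refine ⟨⟨k, (hkj.trans_le hji).le, hk⟩, ?_⟩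
    rintro ⟨k', ⟨hk', -⟩, hkk'⟩
    exact hnk (Fin.ext (hkk'.trans hk.symm) ▸ hk')

end Pinnacle

def IsAdmissible (S : Finset ℕ) : Prop :=
  ∀ s ∈ S, 2 * #{t ∈ S | t ≤ s} < s

instance : DecidablePred IsAdmissible := fun _ => by unfold IsAdmissible; infer_instance

lemma card_filter_perm_le {n : ℕ} (π : Equiv.Perm (Fin n)) (v : Fin n) :
    #{j | π j ≤ v} = v.val + 1 := by
  rw [card_equiv π (t := Iic v) (by simp), Fin.card_Iic]

theorem isAdmissible_pinSet {n : ℕ} (π : Equiv.Perm (Fin n)) : IsAdmissible (pinSet n π) := by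
  intro s hs
  rw [pinSet_eq_image, mem_image] at hs
  obtain ⟨i, hi, rfl⟩ := hs
  have hinj : Function.Injective fun j => (π j).val + 1 :=
    (add_left_injective 1).comp (Fin.val_injective.comp π.injective)
  rw [pinSet_eq_image, filter_image, card_image_of_injective _ hinj, filter_filter]
  simp only [add_le_add_iff_right, Fin.val_fin_le]
  have := (mem_filter.mp hi).2.two_mul_card_lt
  rwa [card_filter_perm_le] at this

lemma pinSet_subset_Icc {n : ℕ} (π : Equiv.Perm (Fin n)) : pinSet n π ⊆ Icc 1 n := by
  rw [pinSet_eq_image, image_subset_iff]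
  exact fun i _ => mem_Icc.mpr ⟨Nat.le_add_left _ _, (π i).isLt⟩

lemma isAdmissible_insert {a : ℕ} {T : Finset ℕ} (hT : ∀ t ∈ T, t < a) :
    IsAdmissible (insert a T) ↔ IsAdmissible T ∧ 2 * (#T + 1) < a := by
  have haT : a ∉ T := fun ha => (hT a ha).false
  have hbelow : ∀ t ∈ T, {u ∈ insert a T | u ≤ t} = {u ∈ T | u ≤ t} := fun t ht => by
    rw [filter_insert, if_neg (hT t ht).not_ge]
  have htop : {u ∈ insert a T | u ≤ a} = insert a T :=
    filter_true_of_mem fun u hu => (mem_insert.mp hu).elim le_of_eq fun h => (hT u h).le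
  simp only [IsAdmissible, forall_mem_insert, htop, card_insert_of_notMem haT]
  constructor
  · rintro ⟨ha, hT'⟩
    exact ⟨fun t ht => hbelow t ht ▸ hT' t ht, ha⟩
  · rintro ⟨hT', ha⟩
    exact ⟨ha, fun t ht => (hbelow t ht).symm ▸ hT' t ht⟩

lemma IsAdmissible.two_mul_card_lt {n : ℕ} {S : Finset ℕ} (hadm : IsAdmissible S)
    (hsub : S ⊆ Icc 1 n) (hne : S.Nonempty) : 2 * #S < n := by
  have hmax := hadm _ (S.max'_mem hne)
  rw [filter_true_of_mem fun t ht => S.le_max' t ht] at hmax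
  have := (mem_Icc.mp (hsub (S.max'_mem hne))).2
  omega

def admissibleSets (n : ℕ) : Finset (Finset ℕ) :=
  {S ∈ (Icc 1 n).powerset | IsAdmissible S}

lemma mem_admissibleSets {n : ℕ} {S : Finset ℕ} :
    S ∈ admissibleSets n ↔ S ⊆ Icc 1 n ∧ IsAdmissible S := by
  rw [admissibleSets, mem_filter, mem_powerset]

lemma card_le_of_mem_admissibleSets {n : ℕ} {S : Finset ℕ} (hS : S ∈ admissibleSets n) :
    #S ≤ (n - 1) / 2 := by
  obtain ⟨hsub, hadm⟩ := mem_admissibleSets.mp hS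
  rcases S.eq_empty_or_nonempty with rfl | hne
  · simp
  · have := hadm.two_mul_card_lt hsub hne
    omega

lemma admissibleSets_succ (n : ℕ) :
    admissibleSets (n + 1) = admissibleSets n ∪
      {T ∈ admissibleSets n | 2 * (#T + 1) < n + 1}.image (insert (n + 1)) := by
  rw [admissibleSets, ← insert_Icc_right_eq_Icc_add_one (by omega), powerset_insert,
    filter_union, filter_image, admissibleSets, filter_filter]
  congr 2
  refine filter_congr fun T hT => ?_
  exact isAdmissible_insert fun t ht => Nat.lt_succ_of_le (mem_Icc.mp (mem_powerset.mp hT ht)).2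

def countAdmissible (n K : ℕ) : ℕ :=
  #{S ∈ admissibleSets n | #S ≤ K}

lemma countAdmissible_zero_right (n : ℕ) : countAdmissible n 0 = 1 := by
  have : {S ∈ admissibleSets n | #S ≤ 0} = {∅} := by
    ext S
    simp only [mem_filter, nonpos_iff_eq_zero, card_eq_zero, mem_singleton, mem_admissibleSets]
    constructor
    · exact And.right
    · rintro rfl
      exact ⟨⟨empty_subset _, by simp [IsAdmissible]⟩, rfl⟩
  rw [countAdmissible, this, card_singleton]

lemma countAdmissible_of_le {n K : ℕ} (h : (n - 1) / 2 ≤ K) :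
    countAdmissible n K = #(admissibleSets n) := by
  rw [countAdmissible, filter_true_of_mem fun S hS => (card_le_of_mem_admissibleSets hS).trans h]

lemma countAdmissible_succ_succ {n K : ℕ} (h : 2 * (K + 1) ≤ n) :
    countAdmissible (n + 1) (K + 1) = countAdmissible n (K + 1) + countAdmissible n K := by
  have hnotMem : ∀ T ∈ admissibleSets n, n + 1 ∉ T := fun T hT hT' =>
    by simpa using (mem_admissibleSets.mp hT).1 hT'
  rw [countAdmissible, admissibleSets_succ, filter_union, filter_image,
    card_union_of_disjoint, card_image_of_injOn]
  · simp only [countAdmissible, filter_filter]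
    congr 2
    refine filter_congr fun T hT => ?_
    rw [card_insert_of_notMem (hnotMem T hT)]
    omega
  · intro T hT T' hT' hTT'
    simp only [coe_filter, mem_filter] at hT hT'
    rw [← erase_insert (hnotMem T hT.1.1), hTT', erase_insert (hnotMem T' hT'.1.1)]
  · simp only [disjoint_left, mem_filter, mem_image]
    rintro _ ⟨hS, -⟩ ⟨T, -, rfl⟩
    exact hnotMem _ hS (mem_insert_self _ _)

theorem countAdmissible_eq_choose {n K : ℕ} (h : 2 * K ≤ n - 1) :
    countAdmissible n K = (n - 1).choose K := by
  induction n generalizing K with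
  | zero =>
    obtain rfl : K = 0 := by omega
    exact countAdmissible_zero_right 0
  | succ n ih =>
    obtain _ | K := K
    · rw [countAdmissible_zero_right, Nat.choose_zero_right]
    obtain ⟨m, rfl⟩ : ∃ m, n = m + 1 := ⟨n - 1, by omega⟩
    simp only [Nat.add_sub_cancel] at h ih ⊢
    have hK : countAdmissible (m + 1) K = m.choose K := ih (by omega)
    have hK1 : countAdmissible (m + 1) (K + 1) = m.choose (K + 1) := by
      rcases h.lt_or_eq with h | h
      · exact ih (by omega)
      · -- `m = 2K + 1`: no admissible subset of `[m + 1]` has more than `K` elements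
        obtain rfl : m = 2 * K + 1 := by omega
        rw [countAdmissible_of_le (by omega), ← countAdmissible_of_le (K := K) (by omega), hK,
          Nat.choose_symm_half]
    rw [countAdmissible_succ_succ h, hK, hK1, Nat.choose_succ_succ', add_comm]

theorem card_admissibleSets (n : ℕ) : #(admissibleSets n) = (n - 1).choose ((n - 1) / 2) := by
  rw [← countAdmissible_of_le le_rfl, countAdmissible_eq_choose (Nat.mul_div_le _ _)]

lemma Nat.count_add_count_not (p : ℕ → Prop) [DecidablePred p] (x : ℕ) :
    Nat.count p x + Nat.count (fun y => ¬p y) x = x := by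
  induction x with
  | zero => simp
  | succ x ih => simp only [Nat.count_succ]; split_ifs <;> omega

lemma Nat.nth_not_lt_of_add_count_lt {p : ℕ → Prop} [DecidablePred p] {k x : ℕ}
    (h : k + Nat.count p x < x) : Nat.nth (fun y => ¬p y) k < x :=
  Nat.nth_lt_of_lt_count (by have := Nat.count_add_count_not p x; omega)

lemma Finset.count_mem_add_one (S : Finset ℕ) (s : ℕ) :
    Nat.count (· ∈ S) (s + 1) = #{t ∈ S | t ≤ s} := by
  rw [Nat.count_eq_card_filter_range]
  congr 1
  ext t
  simp [and_comm]

section Zigzag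

variable {S : Finset ℕ}

noncomputable def peak (S : Finset ℕ) (j : ℕ) : ℕ := Nat.nth (· ∈ S) j

/-- Index `0` is skipped: when `0 ∉ S`, `Nat.nth (· ∉ S) 0 = 0`, so `valley S` enumerates the
positive integers outside `S`. -/
noncomputable def valley (S : Finset ℕ) (t : ℕ) : ℕ := Nat.nth (· ∉ S) (t + 1)

/-- With `s = peak S`, `c = valley S` and `k = #S`, this is the word
`c₀ s₀ c₁ s₁ ⋯ c_{k-1} s_{k-1} c_k c_{k+1} ⋯`. -/
noncomputable def zigzag (S : Finset ℕ) (i : ℕ) : ℕ :=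
  if i % 2 = 1 ∧ i < 2 * #S then peak S (i / 2) else valley S (i - min #S (i / 2))

lemma lt_card_toFinset_ofPred_mem {j : ℕ} (hj : j < #S) :
    ∀ hf : (Set.ofPred (· ∈ S)).Finite, j < #hf.toFinset := fun _ => by
  convert hj
  simp

lemma peak_mem {j : ℕ} (hj : j < #S) : peak S j ∈ S :=
  Nat.nth_mem j (lt_card_toFinset_ofPred_mem hj)

lemma peak_strictMonoOn : StrictMonoOn (peak S) (Set.Iio #S) := fun _ _ _ hb h =>
  Nat.nth_lt_nth' h (lt_card_toFinset_ofPred_mem hb)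

lemma count_peak {j : ℕ} (hj : j < #S) : Nat.count (· ∈ S) (peak S j) = j :=
  Nat.count_nth (lt_card_toFinset_ofPred_mem hj)

lemma exists_peak_eq {s : ℕ} (hs : s ∈ S) : ∃ j < #S, peak S j = s := by
  refine ⟨Nat.count (· ∈ S) s, ?_, Nat.nth_count hs⟩
  have := count_mem_add_one S s
  rw [Nat.count_succ, if_pos hs] at this
  have := card_filter_le S (· ≤ s)
  omega

lemma IsAdmissible.two_mul_lt_peak (hadm : IsAdmissible S) {j : ℕ} (hj : j < #S) :
    2 * (j + 1) < peak S j := by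
  have := hadm _ (peak_mem hj)
  rwa [← count_mem_add_one, Nat.count_succ, count_peak hj, if_pos (peak_mem hj)] at this

lemma valley_notMem (t : ℕ) : valley S t ∉ S :=
  Nat.nth_mem_of_infinite S.finite_toSet.infinite_compl _

lemma valley_strictMono : StrictMono (valley S) := fun _ _ h =>
  Nat.nth_strictMono S.finite_toSet.infinite_compl (Nat.succ_lt_succ h)

lemma valley_pos (t : ℕ) : 0 < valley S t :=
  (Nat.zero_le _).trans_lt (Nat.nth_strictMono S.finite_toSet.infinite_compl t.succ_pos)

lemma valley_lt {t x : ℕ} (h : t + 1 + Nat.count (· ∈ S) x < x) : valley S t < x :=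
  Nat.nth_not_lt_of_add_count_lt h

lemma valley_le {n t : ℕ} (hsub : S ⊆ Icc 1 n) (ht : t + #S < n) : valley S t ≤ n := by
  have : #{u ∈ S | u ≤ n} = #S := by
    rw [filter_true_of_mem fun u hu => (mem_Icc.mp (hsub hu)).2]
  exact Nat.lt_succ_iff.mp (valley_lt (by rw [count_mem_add_one, this]; omega))

lemma IsAdmissible.valley_succ_lt_peak (hadm : IsAdmissible S) {j : ℕ} (hj : j < #S) :
    valley S (j + 1) < peak S j :=
  valley_lt (by have := hadm.two_mul_lt_peak hj; rw [count_peak hj]; omega)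

lemma zigzag_injective : Function.Injective (zigzag S) := by
  intro i i' h
  unfold zigzag at h
  split_ifs at h with hi hi' hi'
  · have := peak_strictMonoOn.injOn (by simp; omega) (by simp; omega) h
    omega
  · exact absurd (h ▸ peak_mem (by omega)) (valley_notMem _)
  · exact absurd (h ▸ peak_mem (by omega)) (valley_notMem _)
  · have := valley_strictMono.injective h
    omega

lemma zigzag_mem_Icc {n i : ℕ} (hsub : S ⊆ Icc 1 n) (hadm : IsAdmissible S) (hi : i < n) :
    zigzag S i ∈ Icc 1 n := by
  unfold zigzag
  split_ifs with h
  · exact hsub (peak_mem (by omega))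
  · have : i < 2 * #S → 2 * #S < n := fun h' =>
      hadm.two_mul_card_lt hsub (card_pos.mp (by omega))
    exact mem_Icc.mpr ⟨valley_pos _, valley_le hsub (by omega)⟩

lemma IsAdmissible.zigzag_lt_succ (hadm : IsAdmissible S) {i : ℕ}
    (hi : ¬(i % 2 = 1 ∧ i < 2 * #S)) : zigzag S i < zigzag S (i + 1) := by
  unfold zigzag
  rw [if_neg hi]
  split_ifs with h
  · rw [show i - min #S (i / 2) = (i + 1) / 2 by omega]
    exact (valley_strictMono (Nat.lt_succ_self _)).trans (hadm.valley_succ_lt_peak (by omega))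
  · exact valley_strictMono (by omega)

lemma isPinnacle_zigzag_iff {n : ℕ} (hsub : S ⊆ Icc 1 n) (hadm : IsAdmissible S) (i : Fin n) :
    IsPinnacle (fun j : Fin n => zigzag S j) i ↔ i.val % 2 = 1 ∧ i.val < 2 * #S := by
  rw [isPinnacle_comp_val_iff]
  constructor
  · rintro ⟨-, -, -, hr⟩
    by_contra h
    exact (hadm.zigzag_lt_succ h).not_gt hr
  · rintro ⟨hodd, hlt⟩
    obtain ⟨j, hj⟩ : ∃ j, i.val = 2 * j + 1 := ⟨i.val / 2, by omega⟩
    have hjS : j < #S := by omega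
    have hpeak : zigzag S (2 * j + 1) = peak S j := by
      rw [zigzag, if_pos (by omega), show (2 * j + 1) / 2 = j by omega]
    have hleft : zigzag S (2 * j) = valley S j := by
      rw [zigzag, if_neg (by omega), show 2 * j - min #S (2 * j / 2) = j by omega]
    have hright : zigzag S (2 * j + 2) = valley S (j + 1) := by
      rw [zigzag, if_neg (by omega), show 2 * j + 2 - min #S ((2 * j + 2) / 2) = j + 1 by omega]
    have hpeak_le : peak S j ≤ n := (mem_Icc.mp (hsub (peak_mem hjS))).2
    have hpeak_gt := hadm.two_mul_lt_peak hjS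
    have hvalley := hadm.valley_succ_lt_peak hjS
    refine ⟨by omega, by omega, ?_, ?_⟩
    · rw [hj, show 2 * j + 1 - 1 = 2 * j by omega, hleft, hpeak]
      exact (valley_strictMono (Nat.lt_succ_self _)).trans hvalley
    · rwa [hj, hright, hpeak]

theorem exists_pinSet_eq {n : ℕ} (hS : S ∈ admissibleSets n) :
    ∃ π : Equiv.Perm (Fin n), pinSet n π = S := by
  obtain ⟨hsub, hadm⟩ := mem_admissibleSets.mp hS
  have hmem (i : Fin n) := mem_Icc.mp (zigzag_mem_Icc hsub hadm i.isLt)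
  let f (i : Fin n) : Fin n := ⟨zigzag S i - 1, by have := hmem i; omega⟩
  have hf : Function.Injective f := fun i i' h => by
    have : zigzag S i - 1 = zigzag S i' - 1 := congrArg Fin.val h
    exact Fin.ext (zigzag_injective (S := S) (by have := hmem i; have := hmem i'; omega))
  let π := Equiv.ofBijective f (Finite.injective_iff_bijective.mp hf)
  have hπ : (fun i => (π i).val + 1) = fun i : Fin n => zigzag S i :=
    funext fun i => by have := hmem i; simp only [π, f, Equiv.ofBijective_apply]; omega
  have hpin (i : Fin n) : IsPinnacle π i ↔ i.val % 2 = 1 ∧ i.val < 2 * #S := by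
    rw [← isPinnacle_comp_iff (g := fun v : Fin n => v.val + 1) fun _ _ h => by simpa using h,
      Function.comp_def, hπ, isPinnacle_zigzag_iff hsub hadm]
  refine ⟨π, ?_⟩
  ext s
  simp only [pinSet_eq_image, hπ, mem_image, mem_filter, mem_univ, true_and, hpin]
  constructor
  · rintro ⟨i, hi, rfl⟩
    rw [zigzag, if_pos hi]
    exact peak_mem (by omega)
  · intro hs
    obtain ⟨j, hj, rfl⟩ := exists_peak_eq hs
    have := hadm.two_mul_lt_peak hj
    have := (mem_Icc.mp (hsub hs)).2
    refine ⟨⟨2 * j + 1, by omega⟩, by simp; omega, ?_⟩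
    rw [zigzag, if_pos (by simp; omega), show (2 * j + 1) / 2 = j by omega]

end Zigzag

theorem image_pinSet (n : ℕ) : univ.image (pinSet n) = admissibleSets n := by
  ext S
  simp only [mem_image, mem_univ, true_and]
  constructor
  · rintro ⟨π, rfl⟩
    exact mem_admissibleSets.mpr ⟨pinSet_subset_Icc π, isAdmissible_pinSet π⟩
  · exact exists_pinSet_eq

theorem stmt1_general (n : ℕ) :
    (Finset.univ.image (pinSet n)).card = Nat.choose (n - 1) ((n - 1) / 2) := by
  rw [image_pinSet, card_admissibleSets]

/-- The number of distinct pinnacle sets of permutations of `[n]` is `C(n-1, ⌊(n-1)/2⌋)`. -/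
theorem stmt1 (n : ℕ) (hn : 1 ≤ n) :
    (Finset.univ.image (pinSet n)).card = Nat.choose (n - 1) ((n - 1) / 2) :=
  stmt1_general n
end

section
/- For m > 2d, the number of admissible pinnacle sets with maximum m and cardinality d equals the number of (m−d, d−1) ballot sequences. -/
def Admissible (S : Finset ℕ) : Prop :=
  ∀ i (h : i < (S.sort (· ≤ ·)).length), 2 * (i + 1) < (S.sort (· ≤ ·)).get ⟨i, h⟩

def ballotSeqs (p q : ℕ) : Finset (Fin (p + q) → Bool) :=
  Finset.univ.filter fun β =>
    (Finset.univ.filter fun i => β i = true).card = p ∧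
    ∀ i : Fin (p + q),
      (Finset.univ.filter fun j => j ≤ i ∧ β j = false).card <
        (Finset.univ.filter fun j => j ≤ i ∧ β j = true).card

/-!
A pinnacle set `S` with maximum `m` is encoded by the word of length `m - 1` whose letter `i`
is `Y` (`false`) if `i + 1 ∈ S` and `X` (`true`) otherwise. Admissibility of `S` says that for
every `t ≥ 1` fewer than half of `1, …, t` lie in `S`, i.e. every nonempty prefix of the word has
more `X`'s than `Y`'s; for `t ≥ m` this is automatic because `2 * #S < m`.
-/

open Finset

theorem Finset.lt_orderEmbOfFin_iff {α : Type*} [LinearOrder α] (S : Finset α) (i : Fin #S)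
    (t : α) : t < S.orderEmbOfFin rfl i ↔ #{s ∈ S | s ≤ t} ≤ i := by
  set e := S.orderEmbOfFin rfl
  constructor
  · intro ht
    calc #{s ∈ S | s ≤ t} ≤ #((Iio i).map e.toEmbedding) := card_le_card fun s hs => ?_
      _ = i := by simp
    rw [mem_filter] at hs
    obtain ⟨j, rfl⟩ : s ∈ Set.range e := by simpa [e] using hs.1
    simpa using e.lt_iff_lt.mp (hs.2.trans_lt ht)
  · intro hcard
    by_contra! hle
    have hsub : (Iic i).map e.toEmbedding ⊆ {s ∈ S | s ≤ t} := by
      intro s hs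
      obtain ⟨j, hj, rfl⟩ := mem_map.mp hs
      exact mem_filter.mpr ⟨S.orderEmbOfFin_mem rfl j, (e.monotone (mem_Iic.mp hj)).trans hle⟩
    have := card_le_card hsub
    simp only [card_map, Fin.card_Iic] at this
    omega

theorem admissible_iff_orderEmbOfFin (S : Finset ℕ) :
    Admissible S ↔ ∀ i : Fin #S, 2 * (i + 1) < S.orderEmbOfFin rfl i := by
  simp only [Admissible, length_sort, List.get_eq_getElem, orderEmbOfFin_apply, Fin.forall_iff,
    Fin.getElem_fin]

theorem admissible_iff_card_filter_le (S : Finset ℕ) :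
    Admissible S ↔ ∀ t, 1 ≤ t → 2 * #{s ∈ S | s ≤ t} < t := by
  rw [admissible_iff_orderEmbOfFin]
  constructor
  · intro hS t ht
    by_cases h0 : #{s ∈ S | s ≤ t} = 0
    · omega
    have hlt : #{s ∈ S | s ≤ t} - 1 < #S := by
      have := card_filter_le S (· ≤ t)
      omega
    have hle := (S.lt_orderEmbOfFin_iff ⟨_, hlt⟩ t).not.mpr (by rw [not_le, Fin.val_mk]; omega)
    have := hS ⟨_, hlt⟩
    simp only at this
    omega
  · intro hS i
    -- `max 1 _` because the hypothesis only speaks about `t ≥ 1`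
    have hle := (S.lt_orderEmbOfFin_iff i (max 1 (S.orderEmbOfFin rfl i))).not.mp (by simp)
    have := hS _ (le_max_left 1 (S.orderEmbOfFin rfl i))
    omega

theorem Admissible.two_lt {S : Finset ℕ} (hS : Admissible S) {s : ℕ} (hs : s ∈ S) : 2 < s := by
  have h2 := (admissible_iff_card_filter_le S).mp hS 2 (by norm_num)
  by_contra! hle
  have : 0 < #{s ∈ S | s ≤ 2} := card_pos.mpr ⟨s, mem_filter.mpr ⟨hs, hle⟩⟩
  omega

theorem admissible_insert_iff {m : ℕ} {T : Finset ℕ} (h : 2 * (#T + 1) < m) :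
    Admissible (insert m T) ↔ ∀ t, 1 ≤ t → t < m → 2 * #{s ∈ T | s ≤ t} < t := by
  rw [admissible_iff_card_filter_le]
  refine forall_congr' fun t => imp_congr_right fun _ => ⟨fun ht htm => ?_, fun ht => ?_⟩
  · simpa [filter_insert, htm.not_ge] using ht
  · by_cases htm : t < m
    · simpa [filter_insert, htm.not_ge] using ht htm
    · calc 2 * #{s ∈ insert m T | s ≤ t} ≤ 2 * (#T + 1) := by
            gcongr
            exact (card_filter_le _ _).trans (card_insert_le _ _)
        _ < t := by omega

theorem mem_ballotSeqs_iff {p q : ℕ} (β : Fin (p + q) → Bool) :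
    β ∈ ballotSeqs p q ↔
      #{i | β i = false} = q ∧ ∀ i, 2 * #{j | j ≤ i ∧ β j = false} < i + 1 := by
  have htotal : #{i | β i = true} + #{i | β i = false} = p + q := by
    simpa using card_filter_add_card_filter_not (s := univ) (fun i => β i = true)
  have hprefix (i : Fin (p + q)) :
      #{j | j ≤ i ∧ β j = true} + #{j | j ≤ i ∧ β j = false} = i + 1 := by
    rw [← Fin.card_Iic, ← card_filter_add_card_filter_not (s := Iic i) (fun j => β j = true)]
    simp [← filter_ge_eq_Iic, filter_filter]
  simp only [ballotSeqs, mem_filter, mem_univ, true_and]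
  refine and_congr (by omega) (forall_congr' fun i => ?_)
  have := hprefix i
  omega

def pinnacleWord (n : ℕ) (S : Finset ℕ) : Fin n → Bool := fun i => decide ((i : ℕ) + 1 ∉ S)

def pinnaclesOfWord {n : ℕ} (β : Fin n → Bool) : Finset ℕ :=
  ({i | β i = false} : Finset (Fin n)).map (Fin.valEmbedding.trans (addRightEmbedding 1))

theorem mem_pinnaclesOfWord {n : ℕ} {β : Fin n → Bool} {s : ℕ} :
    s ∈ pinnaclesOfWord β ↔ ∃ i : Fin n, β i = false ∧ (i : ℕ) + 1 = s := by
  simp [pinnaclesOfWord]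

theorem card_pinnaclesOfWord {n : ℕ} (β : Fin n → Bool) :
    #(pinnaclesOfWord β) = #{i | β i = false} :=
  card_map _

theorem card_filter_le_pinnaclesOfWord {n : ℕ} (β : Fin n → Bool) (i : Fin n) :
    #{s ∈ pinnaclesOfWord β | s ≤ (i : ℕ) + 1} = #{j | j ≤ i ∧ β j = false} := by
  rw [pinnaclesOfWord, filter_map, card_map, filter_filter]
  simp [and_comm]

theorem pinnaclesOfWord_pinnacleWord (n : ℕ) (S : Finset ℕ) :
    pinnaclesOfWord (pinnacleWord n S) = {s ∈ S | 1 ≤ s ∧ s ≤ n} := by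
  ext s
  simp only [mem_pinnaclesOfWord, pinnacleWord, mem_filter, decide_eq_false_iff_not, not_not]
  constructor
  · rintro ⟨i, hi, rfl⟩
    exact ⟨hi, by omega, i.2⟩
  · rintro ⟨hs, h1, hn⟩
    exact ⟨⟨s - 1, by omega⟩, by simpa [Nat.sub_add_cancel h1] using hs, by simp; omega⟩

theorem pinnacleWord_insert_pinnaclesOfWord {n m : ℕ} (hm : n < m) (β : Fin n → Bool) :
    pinnacleWord n (insert m (pinnaclesOfWord β)) = β := by
  funext i
  have hi : (i : ℕ) + 1 ≠ m := by omega
  cases hβ : β i <;> simp [pinnacleWord, mem_pinnaclesOfWord, hi, Fin.val_inj, hβ]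

theorem insert_pinnaclesOfWord_pinnacleWord {n m : ℕ} (hm : n + 1 = m) {S : Finset ℕ}
    (hpos : ∀ s ∈ S, 0 < s) (hmS : m ∈ S) (hle : ∀ s ∈ S, s ≤ m) :
    insert m (pinnaclesOfWord (pinnacleWord n S)) = S := by
  rw [pinnaclesOfWord_pinnacleWord]
  ext s
  simp only [mem_insert, mem_filter]
  constructor
  · rintro (rfl | ⟨hs, -⟩)
    exacts [hmS, hs]
  · intro hs
    rcases eq_or_ne s m with rfl | hsm
    · exact .inl rfl
    · exact .inr ⟨hs, hpos s hs, by have := hle s hs; omega⟩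

theorem admissible_insert_pinnaclesOfWord_iff {n m d : ℕ} (hm : n + 1 = m) (h : 2 * d < m)
    (β : Fin n → Bool) :
    Admissible (insert m (pinnaclesOfWord β)) ∧ #(insert m (pinnaclesOfWord β)) = d ↔
      (∀ i, 2 * #{j | j ≤ i ∧ β j = false} < i + 1) ∧ #{i | β i = false} + 1 = d := by
  have hmT : m ∉ pinnaclesOfWord β := fun hmem => by
    obtain ⟨i, -, hi⟩ := mem_pinnaclesOfWord.mp hmem
    omega
  rw [card_insert_of_notMem hmT, card_pinnaclesOfWord]
  refine and_congr_left fun hcard => ?_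
  rw [admissible_insert_iff (by rw [card_pinnaclesOfWord]; omega)]
  constructor
  · intro hadm i
    simpa [card_filter_le_pinnaclesOfWord] using hadm (i + 1) (by omega) (by omega)
  · intro hballot t ht htm
    obtain ⟨i, rfl⟩ : ∃ i : Fin n, (i : ℕ) + 1 = t := ⟨⟨t - 1, by omega⟩, by simp; omega⟩
    simpa [card_filter_le_pinnaclesOfWord] using hballot i

theorem mem_ballotSeqs_iff_admissible {m d : ℕ} (hd : 0 < d) (h : 2 * d < m)
    (β : Fin (m - d + (d - 1)) → Bool) :
    β ∈ ballotSeqs (m - d) (d - 1) ↔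
      Admissible (insert m (pinnaclesOfWord β)) ∧ #(insert m (pinnaclesOfWord β)) = d := by
  rw [mem_ballotSeqs_iff, admissible_insert_pinnaclesOfWord_iff (by omega) h, and_comm]
  exact and_congr_right fun _ => by omega

def pinnacleSetEquivBallotSeqs {m d : ℕ} (hd : 0 < d) (h : 2 * d < m) :
    {S : Finset ℕ // Admissible S ∧ #S = d ∧ m ∈ S ∧ ∀ s ∈ S, s ≤ m} ≃
      ballotSeqs (m - d) (d - 1) where
  toFun S := ⟨pinnacleWord (m - d + (d - 1)) S, (mem_ballotSeqs_iff_admissible hd h _).mpr <| by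
    rw [insert_pinnaclesOfWord_pinnacleWord (by omega) (fun s hs => (S.2.1.two_lt hs).pos)
      S.2.2.2.1 S.2.2.2.2]
    exact ⟨S.2.1, S.2.2.1⟩⟩
  invFun β := by
    refine ⟨insert m (pinnaclesOfWord β.1),
      (mem_ballotSeqs_iff_admissible hd h _).mp β.2 |>.1,
      (mem_ballotSeqs_iff_admissible hd h _).mp β.2 |>.2, mem_insert_self _ _, ?_⟩
    simp only [forall_mem_insert, le_refl, true_and, mem_pinnaclesOfWord]
    rintro _ ⟨i, -, rfl⟩
    omega
  left_inv S := Subtype.ext <|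
    insert_pinnaclesOfWord_pinnacleWord (n := m - d + (d - 1)) (by omega)
      (fun s hs => (S.2.1.two_lt hs).pos) S.2.2.2.1 S.2.2.2.2
  right_inv β := Subtype.ext <| pinnacleWord_insert_pinnaclesOfWord (m := m) (by omega) β.1

/-- For `m > 2d`, the number of admissible pinnacle sets with maximum `m` and size `d`
equals the number of `(m−d, d−1)` ballot sequences. -/
theorem stmt10 (m d : ℕ) (hd : 0 < d) (h : 2 * d < m) :
    Nat.card {S : Finset ℕ //
        Admissible S ∧ S.card = d ∧ m ∈ S ∧ ∀ s ∈ S, s ≤ m} =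
      (ballotSeqs (m - d) (d - 1)).card := by
  rw [← Nat.card_eq_finsetCard]
  exact Nat.card_congr (pinnacleSetEquivBallotSeqs hd h)
end
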